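/- Let y(x;a) = 1 - Σ_{n≥1} (∏_{j=0}^{n-2}(na+j)/n!) x^n (empty product = 1 for n=1, so the linear coefficient is -1). Then -log y(x;a) = φ_{-1}(x;a) = Σ_{m≥1} (∏_{j=1}^{m-1}(ma+j)/(m-1)!) m^{-1} x^m, as formal power series in x. -/

import Mathlib

/-!
Write `y = 1 - f`. The truncations `S_N = ∑_{k ≤ N} f^k/k` of `-log y` satisfy
`(1 - f) S_N' = (1 - f^N) f'`, and `1 - f` is a unit, so the coefficients of `-log y` are those of
any `g` with `(1 - f) g' = f'`. It remains to check `y φ' = -y'` for `φ = φ_{-1}`. Coefficientwise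
this is the Hagen–Rothe convolution identity
`∑_k u/(u+kz) C(u+kz, k) C(v+(n-k)z, n-k) = C(u+v+nz, n)` at `z = a + 1`, `u = -1`, `v = a`.
Both sides are polynomials in `u` that agree at `u = 0` and whose forward differences are the two
sides of the identity for `n - 1` at `u + z`, so it follows by induction on `n`.
-/

/-- The formal power series
`y(x;a) = 1 - ∑_{n ≥ 1} (∏_{j=0}^{n-2}(na+j)/n!) x^n`. -/
noncomputable def ySeries (a : ℝ) : PowerSeries ℝ :=
  PowerSeries.mk (fun n => if n = 0 then (1 : ℝ) else
    -((∏ j ∈ Finset.range (n - 1), ((n : ℝ) * a + j)) / Nat.factorial n))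

/-- The formal power series `φ_{-1}(x;a) = ∑_{m ≥ 1} (∏_{j=1}^{m-1}(ma+j)/(m-1)!) x^m/m`. -/
noncomputable def phiMinusOne (a : ℝ) : PowerSeries ℝ :=
  PowerSeries.mk (fun m => if m = 0 then 0 else
    ((∏ j ∈ Finset.range (m - 1), ((m : ℝ) * a + (j + 1))) / Nat.factorial (m - 1)) / m)

open Finset

section

open Polynomial Nat

theorem ascPochhammer_eval_eq_prod_range {R : Type*} [CommSemiring R] (n : ℕ) (r : R) :
    (ascPochhammer R n).eval r = ∏ j ∈ range n, (r + j) := by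
  induction n with
  | zero => simp
  | succ n ih => rw [ascPochhammer_succ_eval, ih, prod_range_succ]

theorem descPochhammer_eval_add_sub_one {R : Type*} [CommRing R] (n : ℕ) (r : R) :
    (descPochhammer R n).eval (r + n - 1) = ∏ j ∈ range n, (r + j) := by
  rw [descPochhammer_eval_eq_ascPochhammer, show r + n - 1 - n + 1 = r by ring,
    ascPochhammer_eval_eq_prod_range]

theorem descPochhammer_succ_eval_add_one {R : Type*} [CommRing R] (n : ℕ) (r : R) :
    (descPochhammer R (n + 1)).eval (r + 1) = (r + 1) * (descPochhammer R n).eval r := by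
  simp [descPochhammer_succ_left]

theorem descPochhammer_succ_eval_add_one_sub_eval {R : Type*} [CommRing R] (n : ℕ) (r : R) :
    (descPochhammer R (n + 1)).eval (r + 1) - (descPochhammer R (n + 1)).eval r
      = (n + 1) * (descPochhammer R n).eval r := by
  rw [descPochhammer_succ_eval_add_one, descPochhammer_succ_eval]
  ring

theorem Polynomial.eq_zero_of_eval_natCast_add_one {R : Type*} [CommRing R] [IsDomain R]
    [CharZero R] {p : R[X]} (hp : ∀ n : ℕ, p.eval ((n : R) + 1) = p.eval (n : R))
    (h0 : p.eval 0 = 0) : p = 0 := by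
  have hroot : ∀ n : ℕ, p.eval (n : R) = 0 := by
    intro n
    induction n with
    | zero => simpa using h0
    | succ n ih => rw [Nat.cast_succ, hp, ih]
  exact p.eq_zero_of_infinite_isRoot <|
    Set.infinite_of_injective_forall_mem Nat.cast_injective hroot

variable {K : Type*} [Field K]

/-- `y ↦ C(y + n z, n)`. -/
noncomputable def shiftedChoose (z : K) (n : ℕ) : K[X] :=
  C (n ! : K)⁻¹ * (descPochhammer K n).comp (X + C (n * z))

/-- `x ↦ x / (x + k z) · C(x + k z, k)`. -/
noncomputable def rotheCoeff (z : K) : ℕ → K[X]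
  | 0 => 1
  | k + 1 => C ((k + 1)! : K)⁻¹ * X * (descPochhammer K k).comp (X + C ((k + 1) * z - 1))

@[simp]
theorem eval_shiftedChoose (z y : K) (n : ℕ) :
    (shiftedChoose z n).eval y = (n ! : K)⁻¹ * (descPochhammer K n).eval (y + n * z) := by
  simp [shiftedChoose]

@[simp]
theorem eval_rotheCoeff_zero (z x : K) : (rotheCoeff z 0).eval x = 1 := by
  simp [rotheCoeff]

@[simp]
theorem eval_rotheCoeff_succ (z x : K) (k : ℕ) :
    (rotheCoeff z (k + 1)).eval x
      = ((k + 1)! : K)⁻¹ * x * (descPochhammer K k).eval (x + (k + 1) * z - 1) := by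
  simp [rotheCoeff, add_sub_assoc]

theorem shiftedChoose_eval_add_one_sub_eval [CharZero K] (z y : K) (n : ℕ) :
    (shiftedChoose z (n + 1)).eval (y + 1) - (shiftedChoose z (n + 1)).eval y
      = (shiftedChoose z n).eval (y + z) := by
  have h := descPochhammer_succ_eval_add_one_sub_eval n (y + z + n * z)
  simp only [eval_shiftedChoose, factorial_succ, cast_mul, cast_succ]
  rw [show y + 1 + (n + 1) * z = y + z + n * z + 1 by ring,
    show y + (n + 1) * z = y + z + n * z by ring, ← mul_sub, h]
  field_simp

theorem rotheCoeff_eval_add_one_sub_eval [CharZero K] (z x : K) (k : ℕ) :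
    (rotheCoeff z (k + 1)).eval (x + 1) - (rotheCoeff z (k + 1)).eval x
      = (rotheCoeff z k).eval (x + z) := by
  rcases k with _ | k
  · simp
  · simp only [eval_rotheCoeff_succ, factorial_succ, cast_mul, cast_succ]
    rw [show x + 1 + (k + 1 + 1) * z - 1 = x + z + (k + 1) * z - 1 + 1 by ring,
      show x + (k + 1 + 1) * z - 1 = x + z + (k + 1) * z - 1 by ring,
      descPochhammer_succ_eval_add_one, descPochhammer_succ_eval]
    have : (k ! : K) ≠ 0 := cast_ne_zero.mpr (factorial_ne_zero k)
    have : (k : K) + 1 + 1 ≠ 0 := by norm_cast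
    field_simp
    ring

/-- The Hagen–Rothe identity. -/
theorem sum_antidiagonal_rotheCoeff_mul_shiftedChoose [CharZero K] (z : K) (n : ℕ) (x y : K) :
    ∑ p ∈ antidiagonal n, (rotheCoeff z p.1).eval x * (shiftedChoose z p.2).eval y
      = (shiftedChoose z n).eval (x + y) := by
  induction n generalizing x with
  | zero => simp
  | succ n ih =>
    set P : K[X] := ∑ p ∈ antidiagonal (n + 1), rotheCoeff z p.1 * C ((shiftedChoose z p.2).eval y)
        - (shiftedChoose z (n + 1)).comp (X + C y) with hP
    have hP_eval : ∀ x, P.eval x = (shiftedChoose z (n + 1)).eval y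
        + ∑ p ∈ antidiagonal n, (rotheCoeff z (p.1 + 1)).eval x * (shiftedChoose z p.2).eval y
        - (shiftedChoose z (n + 1)).eval (x + y) := by
      intro x
      simp only [hP, eval_sub, eval_finsetSum, eval_mul, eval_C, eval_comp, eval_add, eval_X,
        Nat.sum_antidiagonal_succ, eval_rotheCoeff_zero, one_mul]
    have periodic : ∀ x, P.eval (x + 1) = P.eval x := by
      intro x
      rw [← sub_eq_zero, hP_eval, hP_eval]
      calc _ = ∑ p ∈ antidiagonal n, (rotheCoeff z p.1).eval (x + z) * (shiftedChoose z p.2).eval y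
            - (shiftedChoose z n).eval (x + z + y) := by
            rw [show x + 1 + y = x + y + 1 by ring, show x + z + y = x + y + z by ring,
              ← shiftedChoose_eval_add_one_sub_eval]
            simp only [← rotheCoeff_eval_add_one_sub_eval, sub_mul, sum_sub_distrib]
            ring
        _ = 0 := by rw [ih, sub_self]
    have hP0 : P = 0 :=
      eq_zero_of_eval_natCast_add_one (fun m => periodic m) (by simp [hP_eval])
    simpa [hP0, sub_eq_zero, Nat.sum_antidiagonal_succ] using (hP_eval x).symm

end

section

open PowerSeries

variable {K : Type*} [Field K] [CharZero K]

theorem PowerSeries.one_sub_mul_derivative_sum_inv_smul_pow (f : K⟦X⟧) (N : ℕ) :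
    (1 - f) * d⁄dX K (∑ k ∈ Icc 1 N, (k : K)⁻¹ • f ^ k) = (1 - f ^ N) * d⁄dX K f := by
  have hterm : ∀ k ∈ Icc 1 N, d⁄dX K ((k : K)⁻¹ • f ^ k) = f ^ (k - 1) * d⁄dX K f := by
    intro k hk
    have hk : (k : K) ≠ 0 := Nat.cast_ne_zero.mpr (by grind)
    rw [Derivation.map_smul, derivative_pow, ← map_natCast (C (R := K)), smul_eq_C_mul, ← mul_assoc,
      ← mul_assoc, ← map_mul, inv_mul_cancel₀ hk, map_one, one_mul]
  rw [map_sum, sum_congr rfl hterm, ← sum_mul, ← Ico_add_one_right_eq_Icc, sum_Ico_eq_sum_range,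
    Nat.add_sub_cancel, ← mul_assoc]
  simp only [Nat.add_sub_cancel_left, mul_neg_geom_sum]

theorem PowerSeries.sum_inv_mul_coeff_pow_eq_coeff {f g : K⟦X⟧} (hf : constantCoeff f = 0)
    (hg : (1 - f) * d⁄dX K g = d⁄dX K f) {n : ℕ} (hn : n ≠ 0) :
    ∑ k ∈ Icc 1 n, (k : K)⁻¹ * coeff n (f ^ k) = coeff n g := by
  set S := ∑ k ∈ Icc 1 n, (k : K)⁻¹ • f ^ k
  have hS : coeff n S = ∑ k ∈ Icc 1 n, (k : K)⁻¹ * coeff n (f ^ k) := by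
    simp [S, map_sum]
  have hdvd : X ^ n ∣ d⁄dX K S - d⁄dX K g := by
    have hunit : IsUnit (1 - f) := by simp [isUnit_iff_constantCoeff, hf]
    have hfn : X ^ n ∣ f ^ n := pow_dvd_pow_of_dvd (X_dvd_iff.mpr hf) n
    rw [← hunit.dvd_mul_left, mul_sub, one_sub_mul_derivative_sum_inv_smul_pow, hg,
      show (1 - f ^ n) * d⁄dX K f - d⁄dX K f = -(f ^ n * d⁄dX K f) by ring]
    exact (hfn.mul_right _).neg_right
  have h := X_pow_dvd_iff.mp hdvd (n - 1) (by omega)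
  rw [map_sub, sub_eq_zero, coeff_derivative, coeff_derivative, Nat.sub_add_cancel (by omega)] at h
  rw [← hS, mul_right_cancel₀ (Nat.cast_add_one_ne_zero (n - 1)) h]

end

open PowerSeries

theorem coeff_ySeries (a : ℝ) (k : ℕ) :
    coeff k (ySeries a) = (rotheCoeff (a + 1) k).eval (-1) := by
  rcases k with _ | k
  · simp [ySeries]
  · have h := descPochhammer_eval_add_sub_one k ((k + 1) * a)
    rw [show (k + 1) * a + k - 1 = -1 + (k + 1) * (a + 1) - 1 by ring] at h
    simp only [ySeries, coeff_mk, eval_rotheCoeff_succ, h]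
    push_cast
    ring

theorem coeff_derivative_ySeries (a : ℝ) (k : ℕ) :
    coeff k (d⁄dX ℝ (ySeries a)) = -(shiftedChoose (a + 1) k).eval (a - 1) := by
  have h := descPochhammer_eval_add_sub_one k ((k + 1) * a)
  rw [show (k + 1) * a + k - 1 = a - 1 + k * (a + 1) by ring] at h
  simp only [coeff_derivative, ySeries, coeff_mk, eval_shiftedChoose, h]
  push_cast
  rw [Nat.factorial_succ]
  push_cast
  field_simp

theorem coeff_derivative_phiMinusOne (a : ℝ) (k : ℕ) :
    coeff k (d⁄dX ℝ (phiMinusOne a)) = (shiftedChoose (a + 1) k).eval a := by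
  have h := descPochhammer_eval_add_sub_one k ((k + 1) * a + 1)
  rw [show (k + 1) * a + 1 + k - 1 = a + k * (a + 1) by ring] at h
  simp only [coeff_derivative, phiMinusOne, coeff_mk, eval_shiftedChoose, h]
  push_cast
  field_simp
  exact prod_congr rfl fun j _ => by ring

theorem ySeries_mul_derivative_phiMinusOne (a : ℝ) :
    ySeries a * d⁄dX ℝ (phiMinusOne a) = -d⁄dX ℝ (ySeries a) := by
  ext n
  rw [coeff_mul, map_neg, coeff_derivative_ySeries, neg_neg, show a - 1 = -1 + a by ring,
    ← sum_antidiagonal_rotheCoeff_mul_shiftedChoose]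
  simp only [coeff_ySeries, coeff_derivative_phiMinusOne]

/-- `-log y(x;a) = φ_{-1}(x;a)` as formal power series: for every `n ≥ 1`, the `x^n`
coefficient of the formal logarithm `log y = ∑_{k ≥ 1} (-1)^{k-1}(y-1)^k/k` (a finite sum
in each coefficient, since `y - 1` has positive order) equals minus the `x^n` coefficient
of `φ_{-1}(x;a)`. -/
theorem stmt19 (a : ℝ) (n : ℕ) (hn : 1 ≤ n) :
    ∑ k ∈ Finset.Icc 1 n,
        ((-1 : ℝ) ^ (k - 1) / k) * PowerSeries.coeff n ((ySeries a - 1) ^ k)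
      = -(PowerSeries.coeff n (phiMinusOne a)) := by
  have hf : constantCoeff (1 - ySeries a) = 0 := by
    rw [map_sub, map_one, ← coeff_zero_eq_constantCoeff_apply]
    simp [ySeries]
  have hg : (1 - (1 - ySeries a)) * d⁄dX ℝ (phiMinusOne a) = d⁄dX ℝ (1 - ySeries a) := by
    rw [sub_sub_cancel, ySeries_mul_derivative_phiMinusOne, map_sub, derivative_one, zero_sub]
  rw [← sum_inv_mul_coeff_pow_eq_coeff hf hg (by omega), ← sum_neg_distrib]
  refine sum_congr rfl fun k hk => ?_
  obtain ⟨j, rfl⟩ : ∃ j, k = j + 1 := ⟨k - 1, by grind⟩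
  rw [← neg_sub, neg_pow (1 - ySeries a), show (-1 : ℝ⟦X⟧) ^ (j + 1) = C ((-1) ^ (j + 1)) by simp,
    coeff_C_mul, Nat.add_sub_cancel, div_mul_eq_mul_div, ← mul_assoc, ← pow_add,
    Odd.neg_one_pow ⟨j, by ring⟩]
  ring
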